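/- arXiv:1103.1866 — 2 statements merged into one kernel-verified Lean document; each statement's English description precedes it below -/
import Mathlib

section
/- For all real numbers $0 < x, y < 1$, one has $x \ln(x/y) + (1-x)\ln((1-x)/(1-y)) \geq \frac{\ln((1-y)/y)}{1-2y}(x-y)^2 + \frac{1}{3}\cdot\frac{(x(1-x)-y(1-y))^2}{|x(1-x)-y(1-y)| + y(1-y)}$ (where the first term on the right is interpreted by continuity as $2(x-y)^2$ when $y = 1/2$). -/
/-!
Write `D(x‖y)` for the left-hand side, `a = x(1-x)`, `b = y(1-y)` and `K` for the coefficient of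
`(x-y)²`. Both sides are invariant under `(x, y) ↦ (1-x, 1-y)`, and `K` is exactly the slope for
which `D(x‖y) - K(x-y)²` is also invariant under `x ↦ 1-x`; so we may take `x, y ≤ 1/2`. There the
absolute value has a fixed sign on each side of `y`, and the difference of the two sides vanishes
to second order at `x = y`.

For `x ≤ y` its second derivative is nonnegative: it is decreasing in `a` and equals
`1/(3b) + 8/3 - 2K ≥ 0` at `a = b`, by the series `artanh z = ∑ z^(2k+1)/(2k+1)` for `z = 1-2y`.
For `y ≤ x ≤ 1/2` its first derivative vanishes at `y` and, by the choice of `K`, at `1/2`, while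
its second derivative is `p(a)/(3a³)` for a cubic `p` that changes sign at most once on `[b, 1/4]`;
so the first derivative is nonnegative in between.
-/

open Real Set

lemma le_of_hasDerivAt_nonneg {f f' : ℝ → ℝ} {a b : ℝ} (hab : a ≤ b)
    (hf : ∀ x ∈ Icc a b, HasDerivAt f (f' x) x) (hf' : ∀ x ∈ Ioo a b, 0 ≤ f' x) :
    f a ≤ f b := by
  refine monotoneOn_of_hasDerivWithinAt_nonneg (f' := f') (convex_Icc a b)
    (fun x hx => (hf x hx).continuousAt.continuousWithinAt) (fun x hx => ?_) (fun x hx => ?_)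
    (left_mem_Icc.2 hab) (right_mem_Icc.2 hab) hab <;> rw [interior_Icc] at hx
  · exact (hf x (Ioo_subset_Icc_self hx)).hasDerivWithinAt
  · exact hf' x hx

lemma le_of_hasDerivAt_nonpos {f f' : ℝ → ℝ} {a b : ℝ} (hab : a ≤ b)
    (hf : ∀ x ∈ Icc a b, HasDerivAt f (f' x) x) (hf' : ∀ x ∈ Ioo a b, f' x ≤ 0) :
    f b ≤ f a :=
  neg_le_neg_iff.1 <| le_of_hasDerivAt_nonneg (f := fun x => -f x) hab
    (fun x hx => (hf x hx).neg) (fun x hx => neg_nonneg.2 (hf' x hx))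

/-- The hypothesis on `g'` makes `g` increase and then decrease on `[s, t]`. -/
lemma nonneg_of_hasDerivAt_of_unimodal {g g' : ℝ → ℝ} {s t z : ℝ} (hz : z ∈ Icc s t)
    (hg : ∀ w ∈ Icc s t, HasDerivAt g (g' w) w)
    (hg' : ∀ v ∈ Icc s t, ∀ w ∈ Icc s t, v ≤ w → 0 ≤ g' w → 0 ≤ g' v)
    (hs : 0 ≤ g s) (ht : 0 ≤ g t) : 0 ≤ g z := by
  by_cases hgz : 0 ≤ g' z
  · exact hs.trans <| le_of_hasDerivAt_nonneg hz.1 (fun w hw => hg w ⟨hw.1, hw.2.trans hz.2⟩)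
      fun v hv => hg' v ⟨hv.1.le, hv.2.le.trans hz.2⟩ z hz hv.2.le hgz
  · refine ht.trans <| le_of_hasDerivAt_nonpos hz.2 (fun w hw => hg w ⟨hz.1.trans hw.1, hw.2⟩)
      fun w hw => ?_
    by_contra! hw'
    exact hgz (hg' z hz w ⟨hz.1.trans hw.1.le, hw.2.le⟩ hw.1.le hw'.le)

def curvCubic (c b a : ℝ) : ℝ := -c * a ^ 3 + 3 * a ^ 2 + 6 * b ^ 2 * a - 2 * b ^ 2

lemma curvCubic_nonneg_of_le_of_le {c b s m t : ℝ} (hs : 0 ≤ s) (hsm : s ≤ m) (hmt : m ≤ t)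
    (hps : 0 ≤ curvCubic c b s) (hpt : 0 ≤ curvCubic c b t) : 0 ≤ curvCubic c b m := by
  refine nonneg_of_hasDerivAt_of_unimodal (g' := fun w => -3 * c * w ^ 2 + 6 * w + 6 * b ^ 2)
    ⟨hsm, hmt⟩ (fun w _ => ?_) ?_ hps hpt
  · refine (((((hasDerivAt_pow 3 w).const_mul (-c)).add ((hasDerivAt_pow 2 w).const_mul 3)).add
      ((hasDerivAt_id' w).const_mul (6 * b ^ 2))).sub_const (2 * b ^ 2)).congr_deriv ?_
    push_cast
    ring
  · -- the derivative divided by `w ^ 2` is antitone in `w > 0`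
    rintro v ⟨hsv, -⟩ w - hvw hw
    rcases (hs.trans hsv).eq_or_lt with rfl | hv
    · nlinarith [sq_nonneg b]
    have hw0 : 0 < w := hv.trans_le hvw
    have : 0 ≤ (-3 * c * v ^ 2 + 6 * v + 6 * b ^ 2) * w ^ 2 := by
      nlinarith [mul_nonneg (mul_nonneg hv.le hw0.le) (sub_nonneg.2 hvw),
        mul_nonneg (sq_nonneg b) (mul_nonneg (sub_nonneg.2 hvw) (add_nonneg hv.le hw0.le)),
        mul_nonneg hw (sq_nonneg v)]
    exact nonneg_of_mul_nonneg_left this (pow_pos hw0 2)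

lemma curvature_bound_of_le {a b : ℝ} (ha : 0 < a) (hab : a ≤ b) (hb : b ≤ 1 / 4) :
    1 / (3 * b) + 8 / 3 ≤
      1 / a - 2 * b ^ 2 / (3 * (2 * b - a) ^ 3) * (1 - 4 * a) -
        2 * ((2 * b - a) ^ 2 - b ^ 2) / (3 * (2 * b - a) ^ 2) := by
  have hb0 : 0 < b := ha.trans_le hab
  have hba : 0 ≤ b - a := by linarith
  have hQ : 0 ≤ 24 * b ^ 3 - a * (22 * b ^ 2 + 76 * b ^ 3) + a ^ 2 * (8 * b + 50 * b ^ 2) -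
      a ^ 3 * (1 + 10 * b) := by
    nlinarith [mul_nonneg (pow_nonneg hb0.le 3) (by linarith : (0 : ℝ) ≤ 1 - 4 * b),
      mul_nonneg hba (sq_nonneg b), mul_nonneg (mul_nonneg hba (sq_nonneg b)) hb0.le,
      mul_nonneg (mul_nonneg hba hba) hb0.le, mul_nonneg (mul_nonneg hba hba) (sq_nonneg b),
      mul_nonneg (mul_nonneg hba hba) hba, mul_nonneg (mul_nonneg (mul_nonneg hba hba) hba) hb0.le]
  have key : 1 / a - 2 * b ^ 2 / (3 * (2 * b - a) ^ 3) * (1 - 4 * a) -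
        2 * ((2 * b - a) ^ 2 - b ^ 2) / (3 * (2 * b - a) ^ 2) - (1 / (3 * b) + 8 / 3) =
      (b - a) * (24 * b ^ 3 - a * (22 * b ^ 2 + 76 * b ^ 3) + a ^ 2 * (8 * b + 50 * b ^ 2) -
        a ^ 3 * (1 + 10 * b)) / (3 * a * b * (2 * b - a) ^ 3) := by
    have : 2 * b - a ≠ 0 := by linarith
    field_simp
    ring
  rw [← sub_nonneg, key]
  exact div_nonneg (mul_nonneg hba hQ) (mul_pos (by positivity) (pow_pos (by linarith) 3)).le

lemma log_sub_log_le {z : ℝ} (hz0 : 0 ≤ z) (hz1 : z < 1) :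
    log (1 + z) - log (1 - z) ≤ 2 * z + 2 / 3 * z ^ 3 / (1 - z ^ 2) := by
  have hser := (hasSum_nat_add_iff' 1).mpr
    (hasSum_log_sub_log_of_abs_lt_one (abs_lt.mpr ⟨by linarith, hz1⟩))
  have hgeom := (hasSum_geometric_of_lt_one (sq_nonneg z) (by nlinarith)).mul_left (2 / 3 * z ^ 3)
  have hle (k : ℕ) : 2 * (1 / (2 * ((k + 1 : ℕ) : ℝ) + 1)) * z ^ (2 * (k + 1) + 1) ≤
      2 / 3 * z ^ 3 * (z ^ 2) ^ k := by
    have hk : 2 * (1 / (2 * ((k + 1 : ℕ) : ℝ) + 1)) ≤ 2 / 3 := by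
      rw [mul_one_div, div_le_div_iff_of_pos_left two_pos (by positivity) three_pos]
      push_cast
      linarith [k.cast_nonneg (α := ℝ)]
    calc _ = 2 * (1 / (2 * ((k + 1 : ℕ) : ℝ) + 1)) * (z ^ 3 * (z ^ 2) ^ k) := by ring
      _ ≤ 2 / 3 * (z ^ 3 * (z ^ 2) ^ k) := by gcongr
      _ = _ := by ring
  have := hasSum_le hle hser hgeom
  simp only [Finset.range_one, Finset.sum_singleton, CharP.cast_eq_zero] at this
  rw [div_eq_mul_inv]
  linarith

noncomputable section

section Correction

variable (b : ℝ)

def corr (s : ℝ) : ℝ := 1 / 3 * (s - b) ^ 2 / s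

def corrDeriv (s : ℝ) : ℝ := (s ^ 2 - b ^ 2) / (3 * s ^ 2)

variable {b}

lemma hasDerivAt_corr {s : ℝ} (hs : s ≠ 0) : HasDerivAt (corr b) (corrDeriv b s) s := by
  refine (((((hasDerivAt_id' s).sub_const b).pow 2).const_mul (1 / 3)).div (hasDerivAt_id' s)
    hs).congr_deriv ?_
  rw [corrDeriv, Pi.pow_apply]
  field_simp
  ring

lemma hasDerivAt_corrDeriv {s : ℝ} (hs : s ≠ 0) :
    HasDerivAt (corrDeriv b) (2 * b ^ 2 / (3 * s ^ 3)) s := by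
  refine (((hasDerivAt_pow 2 s).sub_const (b ^ 2)).div ((hasDerivAt_pow 2 s).const_mul 3)
    (by positivity)).congr_deriv ?_
  field_simp
  ring

end Correction

section KLSubQuad

variable (y K : ℝ)

def klSubQuad (u : ℝ) : ℝ :=
  u * (log u - log y) + (1 - u) * (log (1 - u) - log (1 - y)) - K * (u - y) ^ 2

def klSubQuadDeriv (u : ℝ) : ℝ := log u - log (1 - u) - log y + log (1 - y) - 2 * K * (u - y)

variable {u : ℝ}

lemma hasDerivAt_klSubQuad (hu0 : u ≠ 0) (hu1 : u ≠ 1) :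
    HasDerivAt (klSubQuad y K) (klSubQuadDeriv y K u) u := by
  have hlog₁ := ((hasDerivAt_id' u).const_sub 1).log (sub_ne_zero.2 hu1.symm)
  refine ((((hasDerivAt_id' u).mul ((hasDerivAt_log hu0).sub_const (log y))).add
    (((hasDerivAt_id' u).const_sub 1).mul (hlog₁.sub_const (log (1 - y))))).sub
    ((((hasDerivAt_id' u).sub_const y).pow 2).const_mul K)).congr_deriv ?_
  rw [klSubQuadDeriv]
  field_simp [sub_ne_zero.2 hu1.symm]
  ring

lemma hasDerivAt_klSubQuadDeriv (hu0 : u ≠ 0) (hu1 : u ≠ 1) :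
    HasDerivAt (klSubQuadDeriv y K) (1 / (u * (1 - u)) - 2 * K) u := by
  have hlog₁ := ((hasDerivAt_id' u).const_sub 1).log (sub_ne_zero.2 hu1.symm)
  refine (((((hasDerivAt_log hu0).sub hlog₁).sub_const (log y)).add_const (log (1 - y))).sub
    (((hasDerivAt_id' u).sub_const y).const_mul (2 * K))).congr_deriv ?_
  field_simp [sub_ne_zero.2 hu1.symm]
  ring

end KLSubQuad

section Branch

/-! With `ε = 1` (resp. `ε = -1`), `deficitBranch y K ε` is the difference of the two sides of
the inequality where `x(1-x) ≥ y(1-y)` (resp. `≤`). -/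

variable (y K ε : ℝ)

def branchDenom (u : ℝ) : ℝ := ε * (u * (1 - u) - y * (1 - y)) + y * (1 - y)

def deficitBranch (u : ℝ) : ℝ := klSubQuad y K u - corr (y * (1 - y)) (branchDenom y ε u)

def deficitBranchDeriv (u : ℝ) : ℝ :=
  klSubQuadDeriv y K u - corrDeriv (y * (1 - y)) (branchDenom y ε u) * (ε * (1 - 2 * u))

def deficitBranchDeriv2 (u : ℝ) : ℝ :=
  1 / (u * (1 - u)) - 2 * K -
    (2 * (y * (1 - y)) ^ 2 / (3 * branchDenom y ε u ^ 3) * (ε * (1 - 2 * u)) ^ 2 -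
      2 * ε * corrDeriv (y * (1 - y)) (branchDenom y ε u))

variable {u : ℝ}

lemma hasDerivAt_branchDenom : HasDerivAt (branchDenom y ε) (ε * (1 - 2 * u)) u := by
  refine ((((hasDerivAt_id' u).mul ((hasDerivAt_id' u).const_sub 1)).sub_const
    (y * (1 - y))).const_mul ε |>.add_const (y * (1 - y))).congr_deriv ?_
  ring

lemma hasDerivAt_deficitBranch (hu0 : u ≠ 0) (hu1 : u ≠ 1) (hc : branchDenom y ε u ≠ 0) :
    HasDerivAt (deficitBranch y K ε) (deficitBranchDeriv y K ε u) u :=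
  (hasDerivAt_klSubQuad y K hu0 hu1).sub
    ((hasDerivAt_corr hc).comp u (hasDerivAt_branchDenom y ε))

lemma hasDerivAt_deficitBranchDeriv (hu0 : u ≠ 0) (hu1 : u ≠ 1)
    (hc : branchDenom y ε u ≠ 0) :
    HasDerivAt (deficitBranchDeriv y K ε) (deficitBranchDeriv2 y K ε u) u := by
  refine ((hasDerivAt_klSubQuadDeriv y K hu0 hu1).sub
    (((hasDerivAt_corrDeriv hc).comp u (hasDerivAt_branchDenom y ε)).mul
      (((hasDerivAt_id' u).const_mul 2).const_sub 1 |>.const_mul ε))).congr_deriv ?_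
  rw [deficitBranchDeriv2, Function.comp_apply]
  ring

lemma deficitBranch_self : deficitBranch y K ε y = 0 := by
  simp [deficitBranch, klSubQuad, corr, branchDenom]

lemma deficitBranchDeriv_self : deficitBranchDeriv y K ε y = 0 := by
  simp [deficitBranchDeriv, klSubQuadDeriv, corrDeriv, branchDenom]

lemma deficitBranchDeriv_half (hK : (1 - 2 * y) * K = log (1 - y) - log y) :
    deficitBranchDeriv y K ε (1 / 2) = 0 := by
  rw [deficitBranchDeriv, klSubQuadDeriv, show (1 : ℝ) - 1 / 2 = 1 / 2 by norm_num]
  linear_combination -hK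

lemma deficitBranchDeriv2_one (hu : u * (1 - u) ≠ 0) :
    deficitBranchDeriv2 y K 1 u =
      curvCubic (6 * K - 2) (y * (1 - y)) (u * (1 - u)) / (3 * (u * (1 - u)) ^ 3) := by
  have hc : branchDenom y 1 u = u * (1 - u) := by rw [branchDenom]; ring
  rw [deficitBranchDeriv2, hc, corrDeriv, curvCubic,
    show (1 * (1 - 2 * u)) ^ 2 = 1 - 4 * (u * (1 - u)) by ring]
  generalize u * (1 - u) = a at hu ⊢
  field_simp
  ring

lemma deficitBranchDeriv2_neg_one :
    deficitBranchDeriv2 y K (-1) u =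
      1 / (u * (1 - u)) - 2 * (y * (1 - y)) ^ 2 / (3 * (2 * (y * (1 - y)) - u * (1 - u)) ^ 3) *
        (1 - 4 * (u * (1 - u))) -
        2 * ((2 * (y * (1 - y)) - u * (1 - u)) ^ 2 - (y * (1 - y)) ^ 2) /
          (3 * (2 * (y * (1 - y)) - u * (1 - u)) ^ 2) - 2 * K := by
  have hc : branchDenom y (-1) u = 2 * (y * (1 - y)) - u * (1 - u) := by rw [branchDenom]; ring
  rw [deficitBranchDeriv2, hc, corrDeriv]
  ring

variable {y K}

lemma deficitBranch_one_nonneg {x : ℝ} (hy0 : 0 < y) (hyx : y ≤ x) (hx : x ≤ 1 / 2)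
    (hK : (1 - 2 * y) * K = log (1 - y) - log y)
    (hK' : 2 * K ≤ 1 / (3 * (y * (1 - y))) + 8 / 3) :
    0 ≤ deficitBranch y K 1 x := by
  have hb : 0 < y * (1 - y) := by nlinarith
  have ha {u} (hu : u ∈ Icc y (1 / 2)) : y * (1 - y) ≤ u * (1 - u) := by nlinarith [hu.1, hu.2]
  have hu0 {u} (hu : u ∈ Icc y (1 / 2)) : u ≠ 0 := (hy0.trans_le hu.1).ne'
  have hu1 {u} (hu : u ∈ Icc y (1 / 2)) : u ≠ 1 := by linarith [hu.2]
  have hc {u} (hu : u ∈ Icc y (1 / 2)) : branchDenom y 1 u ≠ 0 := by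
    rw [branchDenom]; linarith [ha hu]
  have hG2 {u} (hu : u ∈ Icc y (1 / 2)) : 0 ≤ deficitBranchDeriv2 y K 1 u ↔
      0 ≤ curvCubic (6 * K - 2) (y * (1 - y)) (u * (1 - u)) := by
    rw [deficitBranchDeriv2_one y K (hb.trans_le (ha hu)).ne',
      le_div_iff₀ (by have := hb.trans_le (ha hu); positivity), zero_mul]
  have hpb : 0 ≤ curvCubic (6 * K - 2) (y * (1 - y)) (y * (1 - y)) := by
    have h6 : 6 * K * (y * (1 - y)) ≤ 1 + 8 * (y * (1 - y)) := by
      rw [div_add' _ _ _ (by positivity), le_div_iff₀ (by positivity)] at hK'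
      linarith
    rw [curvCubic]
    nlinarith [mul_nonneg (sq_nonneg (y * (1 - y))) (sub_nonneg.2 h6)]
  have hG (z) (hz : z ∈ Icc y (1 / 2)) : 0 ≤ deficitBranchDeriv y K 1 z :=
    nonneg_of_hasDerivAt_of_unimodal hz
      (fun w hw => hasDerivAt_deficitBranchDeriv y K 1 (hu0 hw) (hu1 hw) (hc hw))
      (fun v hv w hw hvw hGw => (hG2 hv).2 <| curvCubic_nonneg_of_le_of_le hb.le (ha hv)
        (by nlinarith [hv.1, hw.2]) hpb ((hG2 hw).1 hGw))
      (deficitBranchDeriv_self y K 1).ge (deficitBranchDeriv_half y K 1 hK).ge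
  rw [← deficitBranch_self y K 1]
  refine le_of_hasDerivAt_nonneg hyx (fun w hw => ?_)
    fun w hw => hG w ⟨hw.1.le, hw.2.le.trans hx⟩
  have hw' : w ∈ Icc y (1 / 2) := ⟨hw.1, hw.2.trans hx⟩
  exact hasDerivAt_deficitBranch y K 1 (hu0 hw') (hu1 hw') (hc hw')

lemma deficitBranch_neg_one_nonneg {x : ℝ} (hx0 : 0 < x) (hxy : x ≤ y) (hy : y ≤ 1 / 2)
    (hK' : 2 * K ≤ 1 / (3 * (y * (1 - y))) + 8 / 3) :
    0 ≤ deficitBranch y K (-1) x := by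
  have hb : 0 < y * (1 - y) := by nlinarith
  have ha {u} (hu : u ∈ Icc x y) : u * (1 - u) ≤ y * (1 - y) := by nlinarith [hu.1, hu.2]
  have ha0 {u} (hu : u ∈ Icc x y) : 0 < u * (1 - u) := by nlinarith [hu.1, hu.2]
  have hu0 {u} (hu : u ∈ Icc x y) : u ≠ 0 := (hx0.trans_le hu.1).ne'
  have hu1 {u} (hu : u ∈ Icc x y) : u ≠ 1 := by linarith [hu.2]
  have hc {u} (hu : u ∈ Icc x y) : branchDenom y (-1) u ≠ 0 := by
    rw [branchDenom]; linarith [ha hu]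
  have hG (w) (hw : w ∈ Icc x y) : deficitBranchDeriv y K (-1) w ≤ 0 := by
    rw [← deficitBranchDeriv_self y K (-1)]
    refine le_of_hasDerivAt_nonneg (f' := deficitBranchDeriv2 y K (-1)) hw.2 (fun v hv => ?_)
      fun v hv => ?_
    · have hv' : v ∈ Icc x y := ⟨hw.1.trans hv.1, hv.2⟩
      exact hasDerivAt_deficitBranchDeriv y K (-1) (hu0 hv') (hu1 hv') (hc hv')
    · have hv' : v ∈ Icc x y := ⟨hw.1.trans hv.1.le, hv.2.le⟩
      rw [deficitBranchDeriv2_neg_one]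
      linarith [curvature_bound_of_le (ha0 hv') (ha hv') (by nlinarith [sq_nonneg (1 - 2 * y)])]
  rw [← deficitBranch_self y K (-1)]
  refine le_of_hasDerivAt_nonpos hxy (fun w hw => ?_) fun w hw => hG w (Ioo_subset_Icc_self hw)
  exact hasDerivAt_deficitBranch y K (-1) (hu0 hw) (hu1 hw) (hc hw)

end Branch

def deficit (y K x : ℝ) : ℝ :=
  x * log (x / y) + (1 - x) * log ((1 - x) / (1 - y)) - K * (x - y) ^ 2 -
    (1 / 3) * (x * (1 - x) - y * (1 - y)) ^ 2 / (|x * (1 - x) - y * (1 - y)| + y * (1 - y))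

lemma deficit_one_sub_one_sub (x y K : ℝ) : deficit (1 - y) K (1 - x) = deficit y K x := by
  rw [deficit, deficit, sub_sub_cancel, sub_sub_cancel]
  ring_nf

lemma deficit_one_sub {x y K : ℝ} (hx0 : x ≠ 0) (hx1 : x ≠ 1) (hy0 : y ≠ 0) (hy1 : y ≠ 1)
    (hK : (1 - 2 * y) * K = log (1 - y) - log y) : deficit y K (1 - x) = deficit y K x := by
  have hx1' : 1 - x ≠ 0 := sub_ne_zero.2 hx1.symm
  have hy1' : 1 - y ≠ 0 := sub_ne_zero.2 hy1.symm
  rw [deficit, deficit, sub_sub_cancel, mul_comm (1 - x) x, log_div hx1' hy0, log_div hx0 hy1',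
    log_div hx0 hy0, log_div hx1' hy1']
  linear_combination (2 * x - 1) * hK

lemma deficit_eq_deficitBranch {x y K ε : ℝ} (hx0 : x ≠ 0) (hx1 : x ≠ 1) (hy0 : y ≠ 0)
    (hy1 : y ≠ 1) (hε : ε ^ 2 = 1)
    (habs : |x * (1 - x) - y * (1 - y)| = ε * (x * (1 - x) - y * (1 - y))) :
    deficit y K x = deficitBranch y K ε x := by
  rw [deficit, deficitBranch, klSubQuad, corr, branchDenom, habs, add_sub_cancel_right, mul_pow,
    hε, one_mul, log_div hx0 hy0, log_div (sub_ne_zero.2 hx1.symm) (sub_ne_zero.2 hy1.symm)]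

lemma deficit_nonneg {x y K : ℝ} (hx0 : 0 < x) (hx1 : x < 1) (hy0 : 0 < y) (hy1 : y < 1)
    (hK : (1 - 2 * y) * K = log (1 - y) - log y)
    (hK' : 2 * K ≤ 1 / (3 * (y * (1 - y))) + 8 / 3) : 0 ≤ deficit y K x := by
  wlog hy : y ≤ 1 / 2 generalizing x y
  · rw [← deficit_one_sub_one_sub]
    refine this (by linarith) (by linarith) (by linarith) (by linarith) ?_ ?_ (by linarith)
    · rw [sub_sub_cancel]
      linear_combination -hK
    · rwa [sub_sub_cancel, mul_comm (1 - y) y]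
  wlog hx : x ≤ 1 / 2 generalizing x
  · rw [← deficit_one_sub hx0.ne' hx1.ne hy0.ne' hy1.ne hK]
    exact this (by linarith) (by linarith) (by linarith)
  rcases le_total y x with hyx | hxy
  · rw [deficit_eq_deficitBranch hx0.ne' hx1.ne hy0.ne' hy1.ne (one_pow 2)
      (by rw [one_mul, abs_of_nonneg (by nlinarith)])]
    exact deficitBranch_one_nonneg hy0 hyx hx hK hK'
  · rw [deficit_eq_deficitBranch hx0.ne' hx1.ne hy0.ne' hy1.ne neg_one_sq
      (by rw [neg_one_mul, abs_of_nonpos (by nlinarith)])]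
    exact deficitBranch_neg_one_nonneg hx0 hxy hy hK'

def quadCoeff (y : ℝ) : ℝ := if y = 1 / 2 then 2 else log ((1 - y) / y) / (1 - 2 * y)

lemma one_sub_two_mul_mul_quadCoeff {y : ℝ} (hy0 : y ≠ 0) (hy1 : y ≠ 1) :
    (1 - 2 * y) * quadCoeff y = log (1 - y) - log y := by
  rw [quadCoeff, ← log_div (sub_ne_zero.2 hy1.symm) hy0]
  split_ifs with h
  · norm_num [h]
  · exact mul_div_cancel₀ _ fun h' => h (by linarith)

lemma two_mul_le_of_one_sub_two_mul_mul_eq {y K : ℝ} (hy0 : 0 < y) (hy : y < 1 / 2)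
    (hK : (1 - 2 * y) * K = log (1 - y) - log y) :
    2 * K ≤ 1 / (3 * (y * (1 - y))) + 8 / 3 := by
  have hz : 0 < 1 - 2 * y := by linarith
  have hlog := log_sub_log_le hz.le (by linarith)
  rw [show 1 + (1 - 2 * y) = 2 * (1 - y) by ring, show 1 - (1 - 2 * y) = 2 * y by ring,
    log_mul two_ne_zero (by linarith), log_mul two_ne_zero hy0.ne',
    show 1 - (1 - 2 * y) ^ 2 = 4 * (y * (1 - y)) by ring] at hlog
  have key : 2 * K - (1 / (3 * (y * (1 - y))) + 8 / 3) =
      2 * ((1 - 2 * y) * K - (2 * (1 - 2 * y) + 2 / 3 * (1 - 2 * y) ^ 3 / (4 * (y * (1 - y))))) /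
        (1 - 2 * y) := by
    have : 1 - y ≠ 0 := by linarith
    field_simp
    ring
  rw [← sub_nonpos, key]
  exact div_nonpos_of_nonpos_of_nonneg (by linarith) hz.le

lemma two_mul_quadCoeff_le {y : ℝ} (hy0 : 0 < y) (hy1 : y < 1) :
    2 * quadCoeff y ≤ 1 / (3 * (y * (1 - y))) + 8 / 3 := by
  have hK := one_sub_two_mul_mul_quadCoeff hy0.ne' hy1.ne
  rcases lt_trichotomy y (1 / 2) with hy | rfl | hy
  · exact two_mul_le_of_one_sub_two_mul_mul_eq hy0 hy hK
  · norm_num [quadCoeff]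
  · have := two_mul_le_of_one_sub_two_mul_mul_eq (y := 1 - y) (K := quadCoeff y) (by linarith)
      (by linarith) (by rw [sub_sub_cancel]; linear_combination -hK)
    rwa [sub_sub_cancel, mul_comm (1 - y)] at this

end

theorem stmt_0 (x y : ℝ) (hx0 : 0 < x) (hx1 : x < 1) (hy0 : 0 < y) (hy1 : y < 1) :
    x * Real.log (x / y) + (1 - x) * Real.log ((1 - x) / (1 - y)) ≥
      (if y = 1/2 then 2 else Real.log ((1 - y) / y) / (1 - 2 * y)) * (x - y)^2 +
        (1/3) * (x * (1 - x) - y * (1 - y))^2 /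
          (|x * (1 - x) - y * (1 - y)| + y * (1 - y)) := by
  have h := deficit_nonneg hx0 hx1 hy0 hy1 (one_sub_two_mul_mul_quadCoeff hy0.ne' hy1.ne)
    (two_mul_quadCoeff_le hy0 hy1)
  rw [deficit, quadCoeff] at h
  linarith
end

section
/- Define $g_1(z) = \frac{e^{2z} - 2z e^{z} - 1}{z^2(1+e^{z})^2}$ for $z \neq 0$. Then $g_1(z)/z > 0$ for all real $z \neq 0$; equivalently, $g_1(z) > 0$ for $z > 0$ and $g_1(z) < 0$ for $z < 0$. -/
/-! The numerator equals `2 eᶻ (sinh z - z)`, and `sinh z - z` has the sign of `z`. -/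

open Real

lemma exp_two_mul_sub_two_mul_mul_exp_sub_one (z : ℝ) :
    exp (2 * z) - 2 * z * exp z - 1 = 2 * exp z * (sinh z - z) := by
  rw [sinh_eq, two_mul, exp_add, exp_neg]
  field_simp
  ring

lemma sinh_sub_self_div_self_pos {z : ℝ} (hz : z ≠ 0) : 0 < (sinh z - z) / z := by
  rcases hz.lt_or_gt with hneg | hpos
  · exact div_pos_of_neg_of_neg (sub_neg.mpr (sinh_lt_self_iff.mpr hneg)) hneg
  · exact div_pos (sub_pos.mpr (self_lt_sinh_iff.mpr hpos)) hpos

theorem stmt_3 (z : ℝ) (hz : z ≠ 0) :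
    (Real.exp (2 * z) - 2 * z * Real.exp z - 1) / (z^2 * (1 + Real.exp z)^2) / z > 0 := by
  rw [exp_two_mul_sub_two_mul_mul_exp_sub_one]
  have hfactor : 0 < 2 * exp z / (z ^ 2 * (1 + exp z) ^ 2) := by positivity
  calc (0 : ℝ) < 2 * exp z / (z ^ 2 * (1 + exp z) ^ 2) * ((sinh z - z) / z) :=
        mul_pos hfactor (sinh_sub_self_div_self_pos hz)
    _ = 2 * exp z * (sinh z - z) / (z ^ 2 * (1 + exp z) ^ 2) / z := by ring
end
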